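/- arXiv:0904.1853 — 2 statements merged into one kernel-verified Lean document; each statement's English description precedes it below -/
import Mathlib

section
/- Let Λ = ℤ[t,t⁻¹] and M a finitely generated Λ-module. Every finite Λ-submodule N of M is contained in DM. -/
open LaurentPolynomial

local notation "Λ" => LaurentPolynomial ℤ

/-!
A finite module has elements of finite additive order, and the unit `t` permutes it, so every
`x ∈ N` is killed by some integer `m ≠ 0` and by `t ^ n - 1` for some `n > 0`. These two are
relatively prime in `Λ`: in `ℤ[t]` a common divisor of the constant `m` is a constant, hence a
unit because `t ^ n - 1` is primitive, and relative primality survives localizing at `t` since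
`t` does not divide `m`.
-/

theorem Submonoid.LocalizationMap.isRelPrime_map {M N : Type*} [CommMonoid M]
    [DecompositionMonoid M] {S : Submonoid M} [CommMonoid N] (f : S.LocalizationMap N)
    {a b : M} (haS : ∀ s ∈ S, IsRelPrime a s) (hab : IsRelPrime a b) :
    IsRelPrime (f a) (f b) := by
  intro d hda hdb
  obtain ⟨⟨d₀, s⟩, hd⟩ := f.surj d
  have hassoc : Associated (f d₀) d := hd ▸ associated_mul_unit_left d _ (f.map_units s)
  rw [← hassoc.dvd_iff_dvd_left] at hda hdb
  refine hassoc.isUnit_iff.mp ?_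
  obtain ⟨s₁, hs₁, hd₀a⟩ := f.map_dvd_map.mp hda
  obtain ⟨s₂, hs₂, hd₀b⟩ := f.map_dvd_map.mp hdb
  obtain ⟨d₁, d₂, hd₁, hd₂, rfl⟩ := exists_dvd_and_dvd_of_dvd_mul hd₀a
  have hd₂b : d₂ ∣ b :=
    ((haS s₂ hs₂).of_dvd_left hd₂).dvd_of_dvd_mul_left ((dvd_mul_left d₂ d₁).trans hd₀b)
  rw [map_mul]
  exact (f.map_isUnit_iff.mpr ⟨s₁, hs₁, hd₁⟩).mul ((hab hd₂ hd₂b).map f)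

theorem Polynomial.isRelPrime_C_of_isPrimitive {R : Type*} [CommRing R] [IsDomain R] {r : R}
    (hr : r ≠ 0) {p : Polynomial R} (hp : p.IsPrimitive) : IsRelPrime (C r) p := by
  intro d hdr hdp
  have hd : d.natDegree = 0 := by
    simpa using Polynomial.natDegree_le_of_dvd hdr (C_ne_zero.mpr hr)
  rw [eq_C_of_natDegree_eq_zero hd] at hdp ⊢
  exact isUnit_C.mpr (hp _ hdp)

theorem LaurentPolynomial.isRelPrime_C_T_sub_one {R : Type*} [CommRing R] [IsDomain R]
    [UniqueFactorizationMonoid R] {r : R} (hr : r ≠ 0) {n : ℕ} (hn : n ≠ 0) :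
    IsRelPrime (C r : R[T;T⁻¹]) (T n - 1) := by
  have hX : ∀ s ∈ Submonoid.powers (Polynomial.X : Polynomial R), IsRelPrime (.C r) s := by
    rintro _ ⟨k, rfl⟩
    refine (Polynomial.irreducible_X.isRelPrime_iff_not_dvd.mpr ?_).symm.pow_right
    simpa [Polynomial.X_dvd_iff] using hr
  have hXn : (Polynomial.X ^ n - 1 : Polynomial R).IsPrimitive := by
    simpa using (Polynomial.monic_X_pow_sub_C (1 : R) hn).isPrimitive
  have := (IsLocalization.toLocalizationMap (Submonoid.powers Polynomial.X)
    R[T;T⁻¹]).isRelPrime_map hX (Polynomial.isRelPrime_C_of_isPrimitive hr hXn)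
  simpa [IsLocalization.toLocalizationMap_apply, algebraMap_eq_toLaurent] using this

theorem MulAction.exists_pos_pow_smul_eq_self {G α : Type*} [Group G] [MulAction G α] [Finite α]
    (g : G) : ∃ n, 0 < n ∧ ∀ a : α, g ^ n • a = a := by
  obtain ⟨n, hn, hg⟩ :=
    isOfFinOrder_iff_pow_eq_one.mp (isOfFinOrder_of_finite (toPerm g : Equiv.Perm α))
  refine ⟨n, hn, fun a => ?_⟩
  simpa using congrArg (· a) ((map_pow (toPermHom G α) g n).trans hg)

def DM (R M : Type*) [CommMonoid R] [Zero M] [SMul R M] : Set M :=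
  { x : M | ∃ (s : ℕ) (f : Fin s → R), 2 ≤ s ∧
      (∀ d : R, (∀ i, d ∣ f i) → IsUnit d) ∧ ∀ i, f i • x = 0 }

theorem mem_DM_of_isRelPrime {R M : Type*} [CommMonoid R] [Zero M] [SMul R M] {a b : R}
    (hab : IsRelPrime a b) {x : M} (ha : a • x = 0) (hb : b • x = 0) : x ∈ DM R M :=
  ⟨2, ![a, b], le_rfl, fun _ hd => hab (hd 0) (hd 1), Fin.forall_fin_two.mpr ⟨ha, hb⟩⟩

theorem finite_submodule_subset_DM_general (M : Type*) [AddCommGroup M] [Module Λ M]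
    (N : Submodule Λ M) (hN : Set.Finite (N : Set M)) :
    (N : Set M) ⊆ { x : M | ∃ (s : ℕ) (f : Fin s → Λ), 2 ≤ s ∧
      (∀ d : Λ, (∀ i, d ∣ f i) → IsUnit d) ∧ ∀ i, f i • x = 0 } := by
  intro x hx
  have : Finite N := hN.to_subtype
  obtain ⟨m, hm, hmx⟩ :=
    isOfFinAddOrder_iff_nsmul_eq_zero.mp (isOfFinAddOrder_of_finite (⟨x, hx⟩ : N))
  obtain ⟨n, hn, hnx⟩ :=
    MulAction.exists_pos_pow_smul_eq_self (α := N) (isUnit_T (R := ℤ) 1).unit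
  refine mem_DM_of_isRelPrime (isRelPrime_C_T_sub_one (r := (m : ℤ)) (by omega) hn.ne') ?_ ?_
  · rw [eq_intCast, Int.cast_smul_eq_zsmul, natCast_zsmul]
    exact congrArg Subtype.val hmx
  · have hTn := congrArg Subtype.val (hnx ⟨x, hx⟩)
    rw [Units.smul_def, Submodule.coe_smul, Units.val_pow_eq_pow_val, IsUnit.unit_spec, T_pow,
      mul_one] at hTn
    rw [sub_smul, one_smul, hTn, sub_self]

/-- Every finite `Λ`-submodule `N` of a finitely generated
`Λ = ℤ[t,t⁻¹]`-module `M` is contained in the set `DM`. -/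
theorem finite_submodule_subset_DM (M : Type*) [AddCommGroup M] [Module Λ M]
    [Module.Finite Λ M] (N : Submodule Λ M) (hN : Set.Finite (N : Set M)) :
    (N : Set M) ⊆ { x : M | ∃ (s : ℕ) (f : Fin s → Λ), 2 ≤ s ∧
      (∀ d : Λ, (∀ i, d ∣ f i) → IsUnit d) ∧ ∀ i, f i • x = 0 } :=
  finite_submodule_subset_DM_general M N hN
end

section
/- Let Λ = ℤ[t,t⁻¹]. If D is a finite Λ-module which is nearly symmetric (there is a Λ-exact sequence 0 → D₁ → D → D* → D₀ → 0 with (t-1)D₀ = (t-1)D₁ = 0 and D* finite symmetric), then in the canonical splitting D = D_{t-1} ⊕ D_c, the summand D_c is symmetric, i.e. t-anti isomorphic to Hom_ℤ(D_c, ℚ/ℤ). -/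
/-
The pairing `(x, y) ↦ φ (f x) (f y)` on `D_c` is perfect. The map `f` is injective on `D_c`, as
`ker f` is killed by `t - 1`. Since `t - 1` is bijective on `D_c`, the image `f(D_c)` is divisible
by every power of `t - 1`; as `φ` turns `t` into `t⁻¹` and `t⁻¹ - 1` is a unit multiple of
`t - 1`, this image is orthogonal, on both sides, to the `(t - 1)`-primary part of `D*`. Because
`coker f` is killed by `t - 1`, the Fitting decomposition of `D*` for `t - 1` shows that `D*` is
the sum of `f(D_c)` and that primary part. A perfect pairing restricted to a subgroup with such a
two-sided orthogonal complement stays perfect (surjectivity uses that `ℚ/ℤ` is injective).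
-/

open LaurentPolynomial Submodule

local notation "Λ" => LaurentPolynomial ℤ

section AntiEquivariant

variable {N A F : Type*} [AddCommGroup N] [Module Λ N] [AddCommGroup A]
  [FunLike F N (N →+ A)] [AddMonoidHomClass F N (N →+ A)] {φ : F}

theorem apply_smul_eq_apply_invert_smul
    (hφ : ∀ x y, φ ((T 1 : Λ) • x) y = φ x ((T (-1) : Λ) • y)) (a : Λ) (x y : N) :
    φ (a • x) y = φ x (invert a • y) := by
  have hφ' : ∀ x y, φ ((T (-1) : Λ) • x) y = φ x ((T 1 : Λ) • y) := fun x y => by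
    have h := hφ ((T (-1) : Λ) • x) ((T 1 : Λ) • y)
    rwa [smul_smul, smul_smul, ← T_add, ← T_add, add_neg_cancel, neg_add_cancel, T_zero,
      one_smul, one_smul, eq_comm] at h
  have mul : ∀ b c : Λ, (∀ x y, φ (b • x) y = φ x (invert b • y)) →
      (∀ x y, φ (c • x) y = φ x (invert c • y)) →
      ∀ x y, φ ((b * c) • x) y = φ x (invert (b * c) • y) := by
    intro b c hb hc x y
    rw [mul_smul, hb, hc, map_mul, mul_comm, mul_smul]
  induction a using LaurentPolynomial.induction_on generalizing x y with
  | h_C n =>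
    rw [invert_C, eq_intCast C n, Int.cast_smul_eq_zsmul, Int.cast_smul_eq_zsmul, map_zsmul,
      map_zsmul, AddMonoidHom.zsmul_apply]
  | h_add hp hq => simp [add_smul, hp, hq]
  | h_C_mul_T n a ih =>
    rw [T_add, ← mul_assoc]
    exact mul _ _ ih (by simpa only [invert_T] using hφ) x y
  | h_C_mul_T_Z n a ih =>
    rw [sub_eq_add_neg, T_add, ← mul_assoc]
    exact mul _ _ ih (by simpa only [invert_T, neg_neg] using hφ') x y

theorem invert_T_one_sub_one {R : Type*} [CommRing R] :
    invert (T 1 - 1 : R[T;T⁻¹]) = -T (-1) * (T 1 - 1) := by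
  rw [map_sub, map_one, invert_T, neg_mul, mul_sub, ← T_add, neg_add_cancel, T_zero]
  ring

theorem pow_smul_orthogonal_of_pow_smul_eq_zero
    (hφ : ∀ x y, φ ((T 1 : Λ) • x) y = φ x ((T (-1) : Λ) • y)) {k : ℕ} {n : N}
    (hn : (T 1 - 1 : Λ) ^ k • n = 0) (x : N) :
    φ ((T 1 - 1 : Λ) ^ k • x) n = 0 ∧ φ n ((T 1 - 1 : Λ) ^ k • x) = 0 := by
  have hinv : invert ((T 1 - 1 : Λ) ^ k) • n = 0 := by
    rw [map_pow, invert_T_one_sub_one, mul_pow, mul_smul, hn, smul_zero]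
  constructor
  · rw [apply_smul_eq_apply_invert_smul hφ, hinv, map_zero]
  · rw [← involutive_invert ((T 1 - 1 : Λ) ^ k), ← apply_smul_eq_apply_invert_smul hφ, hinv,
      map_zero, AddMonoidHom.zero_apply]

end AntiEquivariant

section PrimaryPart

variable {R M N : Type*} [CommRing R] [AddCommGroup M] [Module R M] [AddCommGroup N] [Module R N]

theorem mem_iSup_torsionBy_pow_iff {a : R} {x : M} :
    x ∈ ⨆ k : ℕ, torsionBy R M (a ^ k) ↔ ∃ k : ℕ, a ^ k • x = 0 := by
  rw [mem_iSup_of_directed _ (Monotone.directed_le fun i j hij =>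
    torsionBy_le_torsionBy_of_dvd _ _ (pow_dvd_pow a hij))]
  simp only [mem_torsionBy_iff]

theorem exists_pow_smul_sub_eq_zero [IsArtinian R N] {a : R} {f : M →ₗ[R] N}
    (hf : ∀ y, a • y ∈ LinearMap.range f) {C : Submodule R M}
    (hC : Codisjoint (⨆ k : ℕ, torsionBy R M (a ^ k)) C) (w : N) :
    ∃ c ∈ C, ∃ k : ℕ, a ^ k • (w - f c) = 0 := by
  obtain ⟨m, hm⟩ := Filter.eventually_atTop.mp
    (algebraMap R (Module.End R N) a).eventually_codisjoint_ker_pow_range_pow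
  obtain ⟨n, hn, _, ⟨v, rfl⟩, rfl⟩ :=
    mem_sup.mp ((hm (m + 1) m.le_succ).eq_top ▸ mem_top (x := w))
  obtain ⟨d, hd⟩ := hf v
  obtain ⟨p, hp, c, hc, hpc⟩ := mem_sup.mp (hC.eq_top ▸ mem_top (x := a ^ m • d))
  obtain ⟨i, hi⟩ := mem_iSup_torsionBy_pow_iff.mp hp
  have hv : (algebraMap R (Module.End R N) a ^ (m + 1)) v = f p + f c := by
    rw [← map_pow, Module.algebraMap_end_apply, pow_succ, mul_smul, ← hd, ← map_smul, ← hpc,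
      map_add]
  rw [LinearMap.mem_ker, ← map_pow, Module.algebraMap_end_apply] at hn
  refine ⟨c, hc, m + 1 + i, ?_⟩
  have hn' : a ^ (m + 1 + i) • n = 0 := by rw [pow_add, mul_comm, mul_smul, hn, smul_zero]
  have hp' : a ^ (m + 1 + i) • f p = 0 := by
    rw [pow_add, mul_smul, ← map_smul, hi, map_zero, smul_zero]
  rw [hv, ← add_assoc, add_sub_cancel_right, smul_add, hn', hp', add_zero]

end PrimaryPart

theorem exists_addEquiv_apply_eq_of_forall_exists_orthogonal {N C : Type*} [AddCommGroup N]
    [AddCommGroup C] (φ : N ≃+ (N →+ AddCircle (1 : ℚ))) {F : C →+ N}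
    (hF : Function.Injective F)
    (hdecomp : ∀ z, ∃ c n, z = F c + n ∧ ∀ x, φ (F x) n = 0 ∧ φ n (F x) = 0) :
    ∃ ψ : C ≃+ (C →+ AddCircle (1 : ℚ)), ∀ x y, ψ x y = φ (F x) (F y) := by
  let ψ : C →+ C →+ AddCircle (1 : ℚ) :=
    ((φ : N →+ N →+ AddCircle (1 : ℚ)).compl₂ F).comp F
  have hψ (x y : C) : ψ x y = φ (F x) (F y) := rfl
  refine ⟨AddEquiv.ofBijective ψ ⟨?_, fun g => ?_⟩, hψ⟩
  · refine (injective_iff_map_eq_zero ψ).mpr fun x hx => hF ?_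
    suffices φ (F x) = 0 by rw [map_zero, ← map_eq_zero_iff φ φ.injective, this]
    ext z
    obtain ⟨c, n, rfl, hn⟩ := hdecomp z
    rw [map_add, ← hψ, hx, (hn x).1]
    simp
  · obtain ⟨H, hH⟩ := (Module.Baer.of_divisible _).extension_property_addMonoidHom F hF g
    obtain ⟨c, n, hz, hn⟩ := hdecomp (φ.symm H)
    refine ⟨c, AddMonoidHom.ext fun y => ?_⟩
    rw [hψ, eq_sub_of_add_eq hz.symm, map_sub, AddMonoidHom.sub_apply, (hn y).2, sub_zero,
      φ.apply_symm_apply, ← hH, AddMonoidHom.comp_apply]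

theorem nearly_symmetric_Dc_symmetric_general (D : Type) [AddCommGroup D] [Module Λ D]
    (Dstar : Type) [AddCommGroup Dstar] [Module Λ Dstar] [Finite Dstar]
    (f : D →ₗ[Λ] Dstar)
    (hker : ∀ x ∈ LinearMap.ker f, (T 1 - 1 : Λ) • x = 0)
    (hcoker : ∀ y : Dstar, (T 1 - 1 : Λ) • y ∈ LinearMap.range f)
    (hsym : ∃ φ : Dstar ≃+ (Dstar →+ AddCircle (1 : ℚ)),
      ∀ x y, φ ((T 1 : Λ) • x) y = φ x ((T (-1) : Λ) • y)) :
    ∀ Dc : Submodule Λ D,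
      IsCompl (⨆ k : ℕ, Submodule.torsionBy Λ D ((T 1 - 1 : Λ) ^ k)) Dc →
      Function.Bijective (fun x : Dc => (T 1 - 1 : Λ) • x) →
      ∃ φ : Dc ≃+ (Dc →+ AddCircle (1 : ℚ)),
        ∀ x y : Dc, φ ((T 1 : Λ) • x) y = φ x ((T (-1) : Λ) • y) := by
  intro Dc hcompl hbij
  obtain ⟨φ, hφ⟩ := hsym
  have : IsArtinian Λ Dstar := isArtinian_of_finite
  have hinj : Function.Injective (f.comp Dc.subtype) := by
    refine (injective_iff_map_eq_zero _).mpr fun x hx => Subtype.ext ?_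
    refine disjoint_def.mp hcompl.disjoint x (mem_iSup_torsionBy_pow_iff.mpr ⟨1, ?_⟩) x.2
    rw [pow_one]
    exact hker x hx
  have hdiv (k : ℕ) : Function.Surjective fun x : Dc => (T 1 - 1 : Λ) ^ k • x :=
    smul_iterate (α := Dc) (T 1 - 1 : Λ) k ▸ hbij.2.iterate k
  obtain ⟨ψ, hψ⟩ := exists_addEquiv_apply_eq_of_forall_exists_orthogonal φ
    (F := (f.comp Dc.subtype).toAddMonoidHom) hinj fun z => by
      obtain ⟨c, hc, k, hk⟩ := exists_pow_smul_sub_eq_zero hcoker hcompl.codisjoint z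
      refine ⟨⟨c, hc⟩, z - f c, (add_sub_cancel _ _).symm, fun x => ?_⟩
      obtain ⟨x', rfl⟩ := hdiv k x
      simpa using pow_smul_orthogonal_of_pow_smul_eq_zero hφ hk (f x')
  refine ⟨ψ, fun x y => ?_⟩
  simp [hψ, hφ]

/-- Let `D` be a finite `Λ = ℤ[t,t⁻¹]`-module which is nearly symmetric:
there is a `Λ`-linear map `f : D → D*` to a finite symmetric `Λ`-module `D*` whose
kernel `D₁` and cokernel `D₀` are annihilated by `t-1` (encoding the `Λ`-exact sequence
`0 → D₁ → D → D* → D₀ → 0`).  Then in the canonical splitting `D = D_{t-1} ⊕ D_c`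
(with `t-1` bijective on `D_c`), the summand `D_c` is symmetric, i.e. `t`-anti
isomorphic to `Hom_ℤ(D_c, ℚ/ℤ)`. -/
theorem nearly_symmetric_Dc_symmetric (D : Type) [AddCommGroup D] [Module Λ D]
    [Finite D]
    (Dstar : Type) [AddCommGroup Dstar] [Module Λ Dstar] [Finite Dstar]
    (f : D →ₗ[Λ] Dstar)
    (hker : ∀ x ∈ LinearMap.ker f, (T 1 - 1 : Λ) • x = 0)
    (hcoker : ∀ y : Dstar, (T 1 - 1 : Λ) • y ∈ LinearMap.range f)
    (hsym : ∃ φ : Dstar ≃+ (Dstar →+ AddCircle (1 : ℚ)),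
      ∀ x y, φ ((T 1 : Λ) • x) y = φ x ((T (-1) : Λ) • y)) :
    ∀ Dc : Submodule Λ D,
      IsCompl (⨆ k : ℕ, Submodule.torsionBy Λ D ((T 1 - 1 : Λ) ^ k)) Dc →
      Function.Bijective (fun x : Dc => (T 1 - 1 : Λ) • x) →
      ∃ φ : Dc ≃+ (Dc →+ AddCircle (1 : ℚ)),
        ∀ x y : Dc, φ ((T 1 : Λ) • x) y = φ x ((T (-1) : Λ) • y) :=
  nearly_symmetric_Dc_symmetric_general D Dstar f hker hcoker hsym
end
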